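/- arXiv:2003.03308 — 4 statements merged into one kernel-verified Lean document; each statement's English description precedes it below -/
import Mathlib

section
/- Let A be a nonempty finite type and let P, Q be probability mass functions on A such that P is absolutely continuous with respect to Q (i.e., Q(a) = 0 implies P(a) = 0). Let μ = min{Q(a) : a ∈ A, Q(a) > 0}. Then D(P‖Q) ≤ log(1/μ) · ∑_{a∈A} |P(a) − Q(a)|; equivalently, D(P‖Q) ≤ 2·log(1/μ)·‖P − Q‖₁, where ‖P − Q‖₁ = (1/2)·∑_{a∈A} |P(a) − Q(a)| denotes the total variation distance. [Reverse Pinsker inequality, Lemma 1 of the paper.] -/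
open scoped BigOperators

/-- A probability mass function on a finite type: nonnegative and sums to 1. -/
def IsPMF {A : Type*} [Fintype A] (p : A → ℝ) : Prop :=
  (∀ a, 0 ≤ p a) ∧ ∑ a, p a = 1

/-- Shannon entropy (natural log, with `0 * log 0 = 0` by Lean's conventions). -/
noncomputable def entF {A : Type*} [Fintype A] (p : A → ℝ) : ℝ :=
  -∑ a, p a * Real.log (p a)

/-- Kullback–Leibler divergence (natural log, `0 * log (0/q) = 0` by Lean's conventions). -/
noncomputable def klDivF {A : Type*} [Fintype A] (P Q : A → ℝ) : ℝ :=
  ∑ a, P a * Real.log (P a / Q a)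

/-- Pushforward (law of `f` under `p`), i.e. the marginal / induced distribution. -/
noncomputable def pushF {A B : Type*} [Fintype A] [DecidableEq B] (p : A → ℝ) (f : A → B) :
    B → ℝ :=
  fun b => ∑ a, if f a = b then p a else 0

/-- Mutual information `I(X;Y) = H(X) + H(Y) - H(X,Y)` of a joint PMF on a product type. -/
noncomputable def mutInfoF {A B : Type*} [Fintype A] [Fintype B] [DecidableEq A] [DecidableEq B]
    (p : A × B → ℝ) : ℝ :=
  entF (pushF p Prod.fst) + entF (pushF p Prod.snd) - entF p

/-- Conditional mutual information `I(X;Y|W) = H(X,W) + H(Y,W) - H(X,Y,W) - H(W)` of a joint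
PMF on `X × Y × W`. -/
noncomputable def condMIF {X Y W : Type*} [Fintype X] [Fintype Y] [Fintype W]
    [DecidableEq X] [DecidableEq Y] [DecidableEq W] (p : X × Y × W → ℝ) : ℝ :=
  entF (pushF p (fun t => (t.1, t.2.2))) + entF (pushF p (fun t => (t.2.1, t.2.2)))
    - entF p - entF (pushF p (fun t => t.2.2))

/-- Binary entropy function (natural log). -/
noncomputable def binEnt (t : ℝ) : ℝ :=
  -(t * Real.log t) - (1 - t) * Real.log (1 - t)

/-- The Bernoulli(t) PMF on `ZMod 2`, assigning probability `t` to `1`. -/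
noncomputable def bern (t : ℝ) : ZMod 2 → ℝ := fun x => if x = 1 then t else 1 - t

/-! Terms of `D(P‖Q)` with `P a ≤ Q a` are nonpositive and `∑ (P a - Q a)⁺ = ½ ∑ |P a - Q a|`,
so it suffices to show `p log (p / q) ≤ 2 log (1 / μ) (p - q)` for `μ ≤ q < p ≤ 1`. Convexity of
`t ↦ t log (t / q)` on `[q, 1]` gives `(1 - q) p log (p / q) ≤ (p - q) log (1 / q)`, and convexity
of `t ↦ log (1 / t)` on `[μ, 1]` gives `(1 - μ) log (1 / q) ≤ (1 - q) log (1 / μ)`. Finally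
`1 - μ ≥ 1/2`, because `q < 1` forces a second atom of `Q`, of mass at least `μ`. -/

open Real Finset

theorem Finset.sum_abs_eq_two_nsmul_sum_posPart {ι α : Type*} [Lattice α] [AddCommGroup α]
    [AddLeftMono α] (s : Finset ι) (f : ι → α) (hf : ∑ i ∈ s, f i = 0) :
    ∑ i ∈ s, |f i| = 2 • ∑ i ∈ s, (f i)⁺ := by
  calc ∑ i ∈ s, |f i| = ∑ i ∈ s, (|f i| + f i) := by rw [sum_add_distrib, hf, add_zero]
    _ = 2 • ∑ i ∈ s, (f i)⁺ := by simp only [abs_add_eq_two_nsmul_posPart, ← smul_sum]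

theorem ConvexOn.sub_mul_le_chord {s : Set ℝ} {f : ℝ → ℝ} (hf : ConvexOn ℝ s f) {x y z : ℝ}
    (hx : x ∈ s) (hz : z ∈ s) (hxy : x ≤ y) (hyz : y ≤ z) :
    (z - x) * f y ≤ (z - y) * f x + (y - x) * f z := by
  rcases hxy.eq_or_lt with rfl | hxy
  · simp
  rcases hyz.eq_or_lt with rfl | hyz
  · simp
  exact hf.secant_mono_aux1 hx hz hxy hyz

namespace Real

theorem one_sub_mul_log_one_div_le {μ q : ℝ} (hμ : 0 < μ) (hμq : μ ≤ q) (hq : q ≤ 1) :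
    (1 - μ) * log (1 / q) ≤ (1 - q) * log (1 / μ) := by
  have hconv : ConvexOn ℝ (Set.Ioi 0) (fun t ↦ log (1 / t)) :=
    strictConcaveOn_log_Ioi.concaveOn.neg.congr fun t _ ↦ by simp [log_inv]
  simpa using hconv.sub_mul_le_chord hμ (zero_lt_one' ℝ) hμq hq

theorem one_sub_mul_mul_log_div_le_sub_mul_log_one_div {p q : ℝ} (hq : 0 < q) (hqp : q ≤ p)
    (hp : p ≤ 1) :
    (1 - q) * (p * log (p / q)) ≤ (p - q) * log (1 / q) := by
  have hchord := convexOn_mul_log.sub_mul_le_chord hq.le (Set.mem_Ici.2 zero_le_one) hqp hp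
  simp only [log_one, mul_zero, add_zero] at hchord
  rw [log_div (hq.trans_le hqp).ne' hq.ne', one_div, log_inv]
  linear_combination hchord

theorem one_sub_mul_mul_log_div_le {μ p q : ℝ} (hμ : 0 < μ) (hμq : μ ≤ q) (hqp : q ≤ p)
    (hp : p ≤ 1) : (1 - μ) * (p * log (p / q)) ≤ (p - q) * log (1 / μ) := by
  rcases (hqp.trans hp).eq_or_lt with rfl | hq
  · simp [le_antisymm hp hqp]
  have hq0 : 0 < 1 - q := sub_pos.2 hq
  have hμ' := one_sub_mul_log_one_div_le hμ hμq (hqp.trans hp)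
  have hpq := one_sub_mul_mul_log_div_le_sub_mul_log_one_div (hμ.trans_le hμq) hqp hp
  refine le_of_mul_le_mul_left ?_ hq0
  calc (1 - q) * ((1 - μ) * (p * log (p / q)))
      = (1 - μ) * ((1 - q) * (p * log (p / q))) := by ring
    _ ≤ (1 - μ) * ((p - q) * log (1 / q)) := by gcongr; linarith
    _ = (p - q) * ((1 - μ) * log (1 / q)) := by ring
    _ ≤ (p - q) * ((1 - q) * log (1 / μ)) := by gcongr
    _ = (1 - q) * ((p - q) * log (1 / μ)) := by ring

end Real

namespace IsPMF

variable {A : Type*} [Fintype A] {P Q : A → ℝ}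

theorem le_one (hQ : IsPMF Q) (a : A) : Q a ≤ 1 :=
  hQ.2 ▸ single_le_sum (fun b _ ↦ hQ.1 b) (mem_univ a)

theorem add_le_one (hQ : IsPMF Q) {a b : A} (hab : a ≠ b) : Q a + Q b ≤ 1 := by
  classical
  rw [← sum_pair hab, ← hQ.2]
  exact sum_le_sum_of_subset_of_nonneg (subset_univ _) fun c _ _ ↦ hQ.1 c

theorem exists_ne_pos_of_lt_one (hQ : IsPMF Q) {a : A} (ha : Q a < 1) : ∃ b ≠ a, 0 < Q b := by
  by_contra! h
  have hsum : ∑ b, Q b = Q a :=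
    sum_eq_single a (fun b _ hb ↦ le_antisymm (h b hb) (hQ.1 b)) (by simp)
  linarith [hQ.2]

theorem le_half_of_lt_one (hQ : IsPMF Q) {μ : ℝ} (hμ : ∀ b, 0 < Q b → μ ≤ Q b) {a : A}
    (ha₀ : 0 < Q a) (ha₁ : Q a < 1) : μ ≤ 1 / 2 := by
  obtain ⟨b, hba, hb⟩ := hQ.exists_ne_pos_of_lt_one ha₁
  linarith [hQ.add_le_one hba.symm, hμ a ha₀, hμ b hb]

theorem mul_log_div_le_two_mul_posPart (hP : IsPMF P) (hQ : IsPMF Q)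
    (hAC : ∀ a, Q a = 0 → P a = 0) {μ : ℝ} (hμ₀ : 0 < μ) (hμ₁ : μ ≤ 1)
    (hμ : ∀ b, 0 < Q b → μ ≤ Q b) (a : A) :
    P a * log (P a / Q a) ≤ 2 * log (1 / μ) * (P a - Q a)⁺ := by
  rcases le_or_gt (P a) (Q a) with hle | hlt
  · have hterm : P a * log (P a / Q a) ≤ 0 :=
      mul_nonpos_of_nonneg_of_nonpos (hP.1 a)
        (log_nonpos (div_nonneg (hP.1 a) (hQ.1 a)) (div_le_one_of_le₀ hle (hQ.1 a)))
    have hlog : 0 ≤ log (1 / μ) := log_nonneg (one_le_one_div hμ₀ hμ₁)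
    have hpos := posPart_nonneg (P a - Q a)
    linarith [mul_nonneg hlog hpos]
  · have hQa : 0 < Q a := (hQ.1 a).lt_of_ne fun h ↦ by linarith [hAC a h.symm]
    have hhalf := hQ.le_half_of_lt_one hμ hQa (hlt.trans_le (hP.le_one a))
    have hterm : 0 ≤ P a * log (P a / Q a) :=
      mul_nonneg (hP.1 a) (log_nonneg ((one_le_div hQa).2 hlt.le))
    have hkey := one_sub_mul_mul_log_div_le hμ₀ (hμ a hQa) hlt.le (hP.le_one a)
    rw [posPart_eq_self.2 (sub_nonneg.2 hlt.le)]
    linarith [mul_nonneg (sub_nonneg.2 hhalf) hterm]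

end IsPMF

theorem reverse_pinsker_general {A : Type*} [Fintype A]
    (P Q : A → ℝ) (hP : IsPMF P) (hQ : IsPMF Q)
    (hAC : ∀ a, Q a = 0 → P a = 0)
    (μ : ℝ) (hμ : IsLeast {x : ℝ | ∃ a, 0 < Q a ∧ Q a = x} μ) :
    klDivF P Q ≤ Real.log (1 / μ) * ∑ a, |P a - Q a| := by
  obtain ⟨⟨a₀, hQa₀, rfl⟩, hmin⟩ := hμ
  have hsum : ∑ a, (P a - Q a) = 0 := by rw [sum_sub_distrib, hP.2, hQ.2, sub_self]
  calc klDivF P Q ≤ ∑ a, 2 * log (1 / Q a₀) * (P a - Q a)⁺ :=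
        sum_le_sum fun a _ ↦ hP.mul_log_div_le_two_mul_posPart hQ hAC hQa₀ (hQ.le_one a₀)
          (fun b hb ↦ hmin ⟨b, hb, rfl⟩) a
    _ = log (1 / Q a₀) * ∑ a, |P a - Q a| := by
        rw [← mul_sum, sum_abs_eq_two_nsmul_sum_posPart _ _ hsum, nsmul_eq_mul, Nat.cast_ofNat]
        ring

/-- **Reverse Pinsker inequality** (Lemma 1): for PMFs `P, Q` on a nonempty finite type with
`P` absolutely continuous w.r.t. `Q`, and `μ` the minimum positive value of `Q`,
`D(P‖Q) ≤ log(1/μ) · ∑_a |P a − Q a|`. -/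
theorem reverse_pinsker {A : Type*} [Fintype A] [Nonempty A]
    (P Q : A → ℝ) (hP : IsPMF P) (hQ : IsPMF Q)
    (hAC : ∀ a, Q a = 0 → P a = 0)
    (μ : ℝ) (hμ : IsLeast {x : ℝ | ∃ a, 0 < Q a ∧ Q a = x} μ) :
    klDivF P Q ≤ Real.log (1 / μ) * ∑ a, |P a - Q a| :=
  reverse_pinsker_general P Q hP hQ hAC μ hμ
end

section
/- Let Z be a nonempty finite type, n ≥ 1, let p be a PMF on Fin n → Z (the joint law of Z₁,…,Zₙ), let Q₀ be a PMF on Z with Q₀(z) > 0 for all z, and let δ ≥ 0. If D(p ‖ Q₀^{⊗n}) ≤ δ, where Q₀^{⊗n}(z₁,…,zₙ) = ∏_{i=1}^n Q₀(zᵢ), then ∑_{i=1}^{n} I(Zᵢ ; (Z_{i+1},…,Zₙ)) ≤ δ, where the mutual informations are computed from the corresponding marginals of p and the i = n term is interpreted as 0. [Lemma 2 of the paper, second claim.] -/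
open scoped BigOperators

/-! Write `H` for entropy and `pᵢ` for the law of `Zᵢ`. Expanding the logarithm of the product
measure gives `D(p ‖ Q₀^{⊗n}) = ∑ᵢ H(Zᵢ) - H(Z) + ∑ᵢ D(pᵢ ‖ Q₀)`, which is at least
`∑ᵢ H(Zᵢ) - H(Z)` by Gibbs' inequality. On the other side
`I(Zᵢ ; Z_{>i}) = H(Zᵢ) + H(Z_{>i}) - H(Z_{≥i})`, so the sum of the mutual informations
telescopes to exactly `∑ᵢ H(Zᵢ) - H(Z)`. -/

section Pushforward

variable {A B C : Type*} [Fintype A] [Fintype B] [DecidableEq B]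

lemma sum_pushF_mul (p : A → ℝ) (g : A → B) (φ : B → ℝ) :
    ∑ b, pushF p g b * φ b = ∑ a, p a * φ (g a) := by
  simp only [pushF, Finset.sum_mul, ite_mul, zero_mul]
  rw [Finset.sum_comm]
  simp

lemma pushF_pushF [DecidableEq C] (p : A → ℝ) (g : A → B) (σ : B → C) :
    pushF (pushF p g) σ = pushF p (fun a => σ (g a)) := by
  funext c
  calc pushF (pushF p g) σ c = ∑ b, pushF p g b * if σ b = c then 1 else 0 :=
        Finset.sum_congr rfl fun b _ => (mul_boole _ _).symm
    _ = pushF p (fun a => σ (g a)) c := by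
        rw [sum_pushF_mul]
        exact Finset.sum_congr rfl fun a _ => mul_boole _ _

lemma isPMF_pushF {p : A → ℝ} (hp : IsPMF p) (g : A → B) : IsPMF (pushF p g) :=
  ⟨fun _ => Finset.sum_nonneg fun a _ => by split_ifs <;> simp [hp.1 a],
    by simpa [hp.2] using sum_pushF_mul p g (fun _ => 1)⟩

lemma entF_pushF_of_injective (p : A → ℝ) {g : A → B} (hg : Function.Injective g) :
    entF (pushF p g) = entF p := by
  have hrange : ∀ a, pushF p g (g a) = p a := fun a =>
    (Finset.sum_eq_single a (fun b _ hb => if_neg (hg.ne hb)) (by simp)).trans (if_pos rfl)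
  have hout : ∀ b ∉ Set.range g, pushF p g b = 0 := fun b hb =>
    Finset.sum_eq_zero fun a _ => if_neg fun ha => hb ⟨a, ha⟩
  unfold entF
  rw [← Finset.sum_subset (Finset.subset_univ (Finset.univ.image g)) fun b _ hb => by
      simp [hout b (by simpa using hb)],
    Finset.sum_image fun x _ y _ hxy => hg hxy]
  simp [hrange]

lemma entF_pushF_comp_of_injective [Fintype C] [DecidableEq C] (p : A → ℝ) (g : A → B)
    {σ : B → C} (hσ : Function.Injective σ) :
    entF (pushF p (fun a => σ (g a))) = entF (pushF p g) := by
  rw [← pushF_pushF, entF_pushF_of_injective _ hσ]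

lemma entF_pushF_of_subsingleton [Subsingleton B] {p : A → ℝ} (hp : ∑ a, p a = 1)
    (g : A → B) : entF (pushF p g) = 0 := by
  have hone : ∀ b, pushF p g b = 1 := fun b => by simp [pushF, Subsingleton.elim _ b, hp]
  simp [entF, hone]

end Pushforward

section Divergence

variable {A : Type*} [Fintype A]

lemma klDivF_eq_neg_entF_sub {P Q : A → ℝ} (hQ : ∀ a, 0 < Q a) :
    klDivF P Q = -entF P - ∑ a, P a * Real.log (Q a) := by
  rw [klDivF, entF, neg_neg, ← Finset.sum_sub_distrib]
  refine Finset.sum_congr rfl fun a _ => ?_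
  rcases eq_or_ne (P a) 0 with h0 | h0
  · simp [h0]
  · rw [Real.log_div h0 (hQ a).ne', mul_sub]

lemma klDivF_nonneg {P Q : A → ℝ} (hP : IsPMF P) (hQ : IsPMF Q) (hQpos : ∀ a, 0 < Q a) :
    0 ≤ klDivF P Q := by
  have hterm : ∀ a, P a - Q a ≤ P a * Real.log (P a / Q a) := fun a => by
    rcases (hP.1 a).eq_or_lt with h0 | hpos
    · simp [← h0, (hQpos a).le]
    · have := Real.one_sub_inv_le_log_of_pos (div_pos hpos (hQpos a))
      rw [inv_div] at this
      calc P a - Q a = P a * (1 - Q a / P a) := by field_simp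
        _ ≤ _ := mul_le_mul_of_nonneg_left this hpos.le
  calc (0 : ℝ) = ∑ a, (P a - Q a) := by rw [Finset.sum_sub_distrib, hP.2, hQ.2, sub_self]
    _ ≤ klDivF P Q := Finset.sum_le_sum fun a _ => hterm a

end Divergence

section Product

variable {ι Z : Type*} [Fintype ι] [DecidableEq ι] [Fintype Z] [DecidableEq Z]

lemma klDivF_pi_eq (p : (ι → Z) → ℝ) {Q : ι → Z → ℝ} (hQ : ∀ i z, 0 < Q i z) :
    klDivF p (fun f => ∏ i, Q i (f i))
      = ∑ i, (entF (pushF p (· i)) + klDivF (pushF p (· i)) (Q i)) - entF p := by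
  have hlog : ∑ f, p f * Real.log (∏ i, Q i (f i))
      = ∑ i, ∑ z, pushF p (· i) z * Real.log (Q i z) := by
    simp_rw [Real.log_prod fun i _ => (hQ i _).ne', Finset.mul_sum, sum_pushF_mul]
    exact Finset.sum_comm
  rw [klDivF_eq_neg_entF_sub fun f => Finset.prod_pos fun i _ => hQ i (f i), hlog]
  simp_rw [klDivF_eq_neg_entF_sub (hQ _)]
  simp only [add_sub, add_neg_cancel, zero_sub, Finset.sum_neg_distrib]
  ring

lemma sum_entF_marginal_sub_entF_le_klDivF_pi {p : (ι → Z) → ℝ} (hp : IsPMF p)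
    {Q : ι → Z → ℝ} (hQ : ∀ i, IsPMF (Q i)) (hQpos : ∀ i z, 0 < Q i z) :
    ∑ i, entF (pushF p (· i)) - entF p ≤ klDivF p (fun f => ∏ i, Q i (f i)) := by
  rw [klDivF_pi_eq p hQpos, Finset.sum_add_distrib]
  have := Finset.sum_nonneg fun i (_ : i ∈ Finset.univ) =>
    klDivF_nonneg (isPMF_pushF hp (· i)) (hQ i) (hQpos i)
  linarith

end Product

section Tail

variable {Z : Type*} [Fintype Z] [DecidableEq Z] {n : ℕ}

noncomputable def tailEntF (p : (Fin n → Z) → ℝ) (k : ℕ) : ℝ :=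
  entF (pushF p fun f (j : {j : Fin n // k ≤ j.1}) => f j)

lemma tailEntF_zero (p : (Fin n → Z) → ℝ) : tailEntF p 0 = entF p :=
  entF_pushF_of_injective p fun _ _ h => funext fun j => congrFun h ⟨j, Nat.zero_le _⟩

lemma tailEntF_of_le {p : (Fin n → Z) → ℝ} (hp : ∑ f, p f = 1) {k : ℕ} (hk : n ≤ k) :
    tailEntF p k = 0 :=
  have : IsEmpty {j : Fin n // k ≤ j.1} := ⟨fun j => by omega⟩
  entF_pushF_of_subsingleton hp _

lemma entF_pushF_eval_future (p : (Fin n → Z) → ℝ) (i : Fin n) :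
    entF (pushF p fun f => (f i, fun j : {j : Fin n // i < j} => f j.1)) = tailEntF p i := by
  let split : ({j : Fin n // i.1 ≤ j.1} → Z) → Z × ({j : Fin n // i < j} → Z) :=
    fun g => (g ⟨i, le_rfl⟩, fun j => g ⟨j.1, j.2.le⟩)
  have hsplit : Function.Injective split := fun g g' e => by
    obtain ⟨h₁, h₂⟩ := Prod.ext_iff.1 e
    funext ⟨j, hj⟩
    rcases hj.eq_or_lt with hji | hij
    · obtain rfl : i = j := Fin.ext hji
      exact h₁
    · exact congrFun h₂ ⟨j, hij⟩
  rw [tailEntF, ← entF_pushF_comp_of_injective p _ hsplit]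

lemma mutInfoF_pushF_eval_future (p : (Fin n → Z) → ℝ) (i : Fin n) :
    mutInfoF (pushF p fun f => (f i, fun j : {j : Fin n // i < j} => f j.1))
      = entF (pushF p (· i)) + tailEntF p (i + 1) - tailEntF p i := by
  rw [mutInfoF, pushF_pushF, pushF_pushF, entF_pushF_eval_future]
  -- `i < j` unfolds to `i.1 + 1 ≤ j.1`, so the future of `Zᵢ` is literally the tail from `i + 1`.
  rfl

lemma sum_mutInfoF_pushF_eval_future {p : (Fin n → Z) → ℝ} (hp : ∑ f, p f = 1) :
    ∑ i : Fin n, mutInfoF (pushF p fun f => (f i, fun j : {j : Fin n // i < j} => f j.1))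
      = ∑ i, entF (pushF p (· i)) - entF p := by
  simp_rw [mutInfoF_pushF_eval_future, add_sub_assoc]
  rw [Finset.sum_add_distrib,
    Fin.sum_univ_eq_sum_range (fun k => tailEntF p (k + 1) - tailEntF p k), Finset.sum_range_sub,
    tailEntF_of_le hp le_rfl, tailEntF_zero, zero_sub, sub_eq_add_neg]

end Tail

theorem sum_mutInfo_future_le_general {Z : Type*} [Fintype Z] [DecidableEq Z]
    (n : ℕ)
    (p : (Fin n → Z) → ℝ) (hp : IsPMF p)
    (Q₀ : Z → ℝ) (hQ₀ : IsPMF Q₀) (hQ₀pos : ∀ z, 0 < Q₀ z)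
    (δ : ℝ)
    (h : klDivF p (fun f => ∏ i, Q₀ (f i)) ≤ δ) :
    ∑ i : Fin n,
        mutInfoF (pushF p (fun f => (f i, fun j : {j : Fin n // i < j} => f j.1))) ≤ δ := by
  rw [sum_mutInfoF_pushF_eval_future hp.2]
  exact (sum_entF_marginal_sub_entF_le_klDivF_pi hp (fun _ => hQ₀) fun _ => hQ₀pos).trans h

/-- Lemma 2, second claim: if `D(p ‖ Q₀^{⊗n}) ≤ δ` then
`∑_{i=1}^n I(Zᵢ ; (Z_{i+1},…,Zₙ)) ≤ δ`. -/
theorem sum_mutInfo_future_le {Z : Type*} [Fintype Z] [Nonempty Z] [DecidableEq Z]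
    (n : ℕ) (hn : 1 ≤ n)
    (p : (Fin n → Z) → ℝ) (hp : IsPMF p)
    (Q₀ : Z → ℝ) (hQ₀ : IsPMF Q₀) (hQ₀pos : ∀ z, 0 < Q₀ z)
    (δ : ℝ) (hδ : 0 ≤ δ)
    (h : klDivF p (fun f => ∏ i, Q₀ (f i)) ≤ δ) :
    ∑ i : Fin n,
        mutInfoF (pushF p (fun f => (f i, fun j : {j : Fin n // i < j} => f j.1))) ≤ δ :=
  sum_mutInfo_future_le_general n p hp Q₀ hQ₀ hQ₀pos δ h
end

section
/- Let ζ ∈ (0, 1/2). For every α ∈ (0, ζ), define F(α) = −α·log(α/ζ) − (1+α−2ζ)·log((1+α−2ζ)/(1−ζ)) − (ζ−α)·log((ζ−α)/ζ) − (ζ−α)·log((ζ−α)/(1−ζ)), where all logarithms are natural (note that 1+α−2ζ > 0 since ζ < 1/2). Then F(α) ≤ h(ζ) for all α ∈ (0, ζ), with equality if and only if α = ζ². [Equations (40)–(41) in the proof of Proposition 1 of the paper.] -/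
open scoped BigOperators

/-- The objective function of equations (40)–(41). -/
noncomputable def Fobj (ζ α : ℝ) : ℝ :=
  -(α * Real.log (α / ζ))
    - (1 + α - 2 * ζ) * Real.log ((1 + α - 2 * ζ) / (1 - ζ))
    - (ζ - α) * Real.log ((ζ - α) / ζ)
    - (ζ - α) * Real.log ((ζ - α) / (1 - ζ))

open Real InformationTheory

/-!
`h(ζ) - F(α)` is the Kullback–Leibler divergence of the distribution
`(α, ζ - α, ζ - α, 1 + α - 2ζ)` from `Bern(ζ) ⊗ Bern(ζ) = (ζ², ζ(1-ζ), ζ(1-ζ), (1-ζ)²)`.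
As both vectors sum to `1`, it equals `∑ qᵢ · klFun (pᵢ / qᵢ)`, a sum of nonnegative terms which
vanishes exactly when `p = q`, i.e. when `α = ζ²`.
-/

lemma mul_log_div_of_ne_zero {q : ℝ} (hq : q ≠ 0) (p : ℝ) :
    p * log (p / q) = p * log p - p * log q := by
  rcases eq_or_ne p 0 with rfl | hp
  · simp
  · rw [log_div hp hq, mul_sub]

lemma mul_klFun_div_of_ne_zero {q : ℝ} (hq : q ≠ 0) (p : ℝ) :
    q * klFun (p / q) = p * log p - p * log q - p + q := by
  rw [klFun_apply, ← mul_log_div_of_ne_zero hq]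
  field_simp
  ring

lemma binEnt_sub_Fobj {ζ : ℝ} (hζ0 : ζ ≠ 0) (hζ1 : 1 - ζ ≠ 0) (α : ℝ) :
    binEnt ζ - Fobj ζ α =
      ζ ^ 2 * klFun (α / ζ ^ 2)
        + 2 * ((ζ * (1 - ζ)) * klFun ((ζ - α) / (ζ * (1 - ζ))))
        + (1 - ζ) ^ 2 * klFun ((1 + α - 2 * ζ) / (1 - ζ) ^ 2) := by
  rw [mul_klFun_div_of_ne_zero (pow_ne_zero 2 hζ0),
    mul_klFun_div_of_ne_zero (mul_ne_zero hζ0 hζ1),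
    mul_klFun_div_of_ne_zero (pow_ne_zero 2 hζ1), binEnt, Fobj,
    mul_log_div_of_ne_zero hζ0, mul_log_div_of_ne_zero hζ1, mul_log_div_of_ne_zero hζ0,
    mul_log_div_of_ne_zero hζ1, log_pow, log_pow, log_mul hζ0 hζ1]
  push_cast
  ring

/-- Equations (40)–(41) in the proof of Proposition 1: for `ζ ∈ (0,1/2)` and `α ∈ (0,ζ)`,
`F(α) ≤ h(ζ)`, with equality iff `α = ζ²`. -/
theorem Fobj_le_binEnt (ζ : ℝ) (hζ0 : 0 < ζ) (hζ : ζ < 1 / 2)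
    (α : ℝ) (hα0 : 0 < α) (hαζ : α < ζ) :
    Fobj ζ α ≤ binEnt ζ ∧ (Fobj ζ α = binEnt ζ ↔ α = ζ ^ 2) := by
  have hζ1 : 0 < 1 - ζ := by linarith
  have hdiff := binEnt_sub_Fobj hζ0.ne' hζ1.ne' α
  have k₁ : 0 ≤ klFun (α / ζ ^ 2) := klFun_nonneg (by positivity)
  have k₂ : 0 ≤ klFun ((ζ - α) / (ζ * (1 - ζ))) :=
    klFun_nonneg (div_nonneg (by linarith) (by positivity))
  have k₃ : 0 ≤ klFun ((1 + α - 2 * ζ) / (1 - ζ) ^ 2) :=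
    klFun_nonneg (div_nonneg (by linarith) (by positivity))
  have t₁ := mul_nonneg (sq_nonneg ζ) k₁
  have t₂ := mul_nonneg (mul_pos hζ0 hζ1).le k₂
  have t₃ := mul_nonneg (sq_nonneg (1 - ζ)) k₃
  refine ⟨by linarith, fun heq => ?_, fun hα => ?_⟩
  · have hk₁ : klFun (α / ζ ^ 2) = 0 := by
      have : ζ ^ 2 * klFun (α / ζ ^ 2) = 0 := by linarith
      simpa [hζ0.ne'] using this
    exact (div_eq_one_iff_eq (by positivity)).1 ((klFun_eq_zero_iff (by positivity)).1 hk₁)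
  · have h₁ : α / ζ ^ 2 = 1 := by rw [hα]; field_simp
    have h₂ : (ζ - α) / (ζ * (1 - ζ)) = 1 := by rw [hα]; field_simp
    have h₃ : (1 + α - 2 * ζ) / (1 - ζ) ^ 2 = 1 := by rw [hα]; field_simp; ring
    rw [h₁, h₂, h₃, klFun_one] at hdiff
    linarith
end

section
/- Let q be a PMF on {0,1} × {0,1} (the law of a pair (S₁,S₂)) and set p₁₀ = q(1,0). (i) For every joint PMF p on {0,1}³ (the joint law of (X,S₁,S₂)) whose (S₁,S₂)-marginal equals q and which satisfies p(x,s₁,1) = 0 whenever x = 1 (i.e., X·S₂ = 0 with probability one), the conditional mutual information I(X ; X·S₁ | (S₁,S₂)), computed from the induced joint law of (X, X·S₁, S₁, S₂) where X·S₁ denotes the product in {0,1}, satisfies I(X ; X·S₁ | (S₁,S₂)) ≤ p₁₀ · log 2. (ii) There exists such a joint PMF p achieving I(X ; X·S₁ | (S₁,S₂)) = p₁₀ · log 2. [Proposition 2 of the paper: covert capacity of the binary multiplicative-state channel equals p_{1,0} bits.] -/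
open scoped BigOperators

/-! Since `Y = X·S₁` is a function of `(X, S₁, S₂)`, `I(X; Y | S) = H(Y | S)`. On states with
`S₁ = 0` the output is constant, and on `(1, 1)` the constraint forces `X = 0`, so only the state
`(1, 0)` contributes, namely its mass times the binary entropy of `X` there. By concavity of
`-x log x` this is at most `p₁₀ log 2`, with equality for uniform `X` on that state. -/

open Real

lemma sum_zmod_two (f : ZMod 2 → ℝ) : ∑ x, f x = f 0 + f 1 := Fin.sum_univ_two f

lemma entF_eq_sum_negMulLog {A : Type*} [Fintype A] (p : A → ℝ) :
    entF p = ∑ a, negMulLog (p a) := by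
  simp only [entF, negMulLog, ← Finset.sum_neg_distrib, neg_mul]

lemma sum_pushF {A B : Type*} [Fintype A] [Fintype B] [DecidableEq B] (p : A → ℝ) (f : A → B) :
    ∑ b, pushF p f b = ∑ a, p a := by
  simp only [pushF]
  rw [Finset.sum_comm]
  simp

lemma pushF_snd_apply {S : Type*} [Fintype S] [DecidableEq S] (p : ZMod 2 × S → ℝ) (s : S) :
    pushF p Prod.snd s = p (0, s) + p (1, s) := by
  simp [pushF, Fintype.sum_prod_type, sum_zmod_two]

/-- The mass-weighted entropy of `X` on a state of mass `u + v`: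
`splitEntropy u v = (u + v) * binEnt (u / (u + v))`. -/
noncomputable def splitEntropy (u v : ℝ) : ℝ :=
  negMulLog u + negMulLog v - negMulLog (u + v)

lemma splitEntropy_zero_right (u : ℝ) : splitEntropy u 0 = 0 := by
  simp [splitEntropy]

lemma splitEntropy_le {u v : ℝ} (hu : 0 ≤ u) (hv : 0 ≤ v) :
    splitEntropy u v ≤ (u + v) * log 2 := by
  have hmid := concaveOn_negMulLog.2 (Set.mem_Ici.2 hu) (Set.mem_Ici.2 hv)
    (by norm_num : (0 : ℝ) ≤ 2⁻¹) (by norm_num : (0 : ℝ) ≤ 2⁻¹) (by norm_num)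
  have hhalf : negMulLog (2⁻¹ * u + 2⁻¹ * v) = (negMulLog (u + v) + (u + v) * log 2) / 2 := by
    rw [← mul_add, negMulLog_mul, negMulLog, log_inv]
    ring
  simp only [smul_eq_mul, hhalf] at hmid
  unfold splitEntropy
  linarith

lemma splitEntropy_self (u : ℝ) : splitEntropy u u = (u + u) * log 2 := by
  rw [splitEntropy, ← two_mul u, negMulLog_mul]
  simp only [negMulLog]
  ring

/-- For the channel `Y = X * S₁`, the output reveals `X` exactly on the states with `S₁ = 1`. -/
lemma condMIF_mul_channel (p : ZMod 2 × ZMod 2 × ZMod 2 → ℝ) :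
    condMIF (pushF p (fun t => (t.1, t.1 * t.2.1, (t.2.1, t.2.2)))) =
      splitEntropy (p (0, 1, 0)) (p (1, 1, 0)) + splitEntropy (p (0, 1, 1)) (p (1, 1, 1)) := by
  simp only [condMIF, entF_eq_sum_negMulLog, pushF, Fintype.sum_prod_type, sum_zmod_two,
    Prod.mk.injEq, splitEntropy]
  norm_num
  ring

lemma condMIF_mul_channel_le {p : ZMod 2 × ZMod 2 × ZMod 2 → ℝ} (hp : ∀ t, 0 ≤ p t)
    (hp₁₁ : p (1, 1, 1) = 0) :
    condMIF (pushF p (fun t => (t.1, t.1 * t.2.1, (t.2.1, t.2.2)))) ≤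
      (p (0, 1, 0) + p (1, 1, 0)) * log 2 := by
  rw [condMIF_mul_channel, hp₁₁, splitEntropy_zero_right, add_zero]
  exact splitEntropy_le (hp _) (hp _)

noncomputable def optimalInput (q : ZMod 2 × ZMod 2 → ℝ) : ZMod 2 × ZMod 2 × ZMod 2 → ℝ :=
  fun t => if t.2 = (1, 0) then q t.2 / 2 else if t.1 = 0 then q t.2 else 0

lemma pushF_snd_optimalInput (q : ZMod 2 × ZMod 2 → ℝ) :
    pushF (optimalInput q) Prod.snd = q := by
  funext s
  rw [pushF_snd_apply]
  simp only [optimalInput]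
  split_ifs <;> simp_all

lemma isPMF_optimalInput {q : ZMod 2 × ZMod 2 → ℝ} (hq : IsPMF q) : IsPMF (optimalInput q) := by
  refine ⟨fun t => ?_, ?_⟩
  · have := hq.1 t.2
    simp only [optimalInput]
    split_ifs <;> positivity
  · rw [← sum_pushF _ Prod.snd, pushF_snd_optimalInput, hq.2]

lemma optimalInput_one_one (q : ZMod 2 × ZMod 2 → ℝ) (s₁ : ZMod 2) :
    optimalInput q (1, s₁, 1) = 0 := by
  simp [optimalInput]

lemma condMIF_mul_channel_optimalInput (q : ZMod 2 × ZMod 2 → ℝ) :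
    condMIF (pushF (optimalInput q) (fun t => (t.1, t.1 * t.2.1, (t.2.1, t.2.2)))) =
      q (1, 0) * log 2 := by
  rw [condMIF_mul_channel, optimalInput_one_one, splitEntropy_zero_right]
  norm_num [optimalInput, splitEntropy_self]

/-- Proposition 2 (covert capacity of the binary multiplicative-state channel): with
`q` the law of `(S₁,S₂)` and `p₁₀ = q(1,0)`,
(i) every joint law `p` of `(X,S₁,S₂)` with `(S₁,S₂)`-marginal `q` and `X·S₂ = 0` a.s.
satisfies `I(X ; X·S₁ | (S₁,S₂)) ≤ p₁₀·log 2`, and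
(ii) some such `p` achieves `I(X ; X·S₁ | (S₁,S₂)) = p₁₀·log 2`. -/
theorem covert_capacity_binary_multiplicative
    (q : ZMod 2 × ZMod 2 → ℝ) (hq : IsPMF q) :
    (∀ p : ZMod 2 × ZMod 2 × ZMod 2 → ℝ, IsPMF p →
        pushF p (fun t => (t.2.1, t.2.2)) = q →
        (∀ s₁ : ZMod 2, p (1, s₁, 1) = 0) →
        condMIF (pushF p (fun t => (t.1, t.1 * t.2.1, (t.2.1, t.2.2))))
          ≤ q (1, 0) * Real.log 2)
      ∧ (∃ p : ZMod 2 × ZMod 2 × ZMod 2 → ℝ, IsPMF p ∧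
          pushF p (fun t => (t.2.1, t.2.2)) = q ∧
          (∀ s₁ : ZMod 2, p (1, s₁, 1) = 0) ∧
          condMIF (pushF p (fun t => (t.1, t.1 * t.2.1, (t.2.1, t.2.2))))
            = q (1, 0) * Real.log 2) := by
  refine ⟨fun p hp hmarg hp₁ => ?_, optimalInput q, isPMF_optimalInput hq,
    pushF_snd_optimalInput q, optimalInput_one_one q, condMIF_mul_channel_optimalInput q⟩
  have hmass : p (0, 1, 0) + p (1, 1, 0) = q (1, 0) := by
    rw [← pushF_snd_apply, ← hmarg]
  exact hmass ▸ condMIF_mul_channel_le hp.1 (hp₁ 1)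
end
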